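/- arXiv:2103.14840 — 5 statements merged into one kernel-verified Lean document; each statement's English description precedes it below -/
import Mathlib

section
/- Let |μ_R⟩ = (1/√χ_R) Σ_{r=1}^R r^{-1/2} |r⟩ where χ_R = Σ_{r=1}^R 1/r. For every ε > 0 and integer d, there exists R₀ such that for all R ≥ R₀ and every unit vector |φ⟩ = Σ_{j=1}^d c_j |j⟩ ∈ ℂ^d with all c_j ≥ 0, there exists a permutation π of [dR] with ⟨μ_R| P_π (|φ⟩ ⊗ |μ_R⟩) ≥ 1 − ε, where P_π is the permutation matrix of π and |μ_R⟩ is regarded as a vector in ℂ^{dR} by padding with zeros. -/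
open Finset

/-- The `R`-th harmonic number `χ_R = ∑_{r=1}^R 1/r`. -/
noncomputable def harmonic' (R : ℕ) : ℝ := ∑ r ∈ Finset.range R, 1 / ((r : ℝ) + 1)

/-- The coordinates of the embezzling state `|μ_R⟩ = (1/√χ_R) ∑_{r=1}^R r^{-1/2} |r⟩`. -/
noncomputable def muVec (R : ℕ) (r : Fin R) : ℝ :=
  (Real.sqrt (harmonic' R))⁻¹ * (Real.sqrt ((r : ℝ) + 1))⁻¹

open scoped Classical

lemma muVec_nonneg (R : ℕ) (r : Fin R) : 0 ≤ muVec R r :=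
  mul_nonneg (inv_nonneg.2 (Real.sqrt_nonneg _)) (inv_nonneg.2 (Real.sqrt_nonneg _))

lemma harmonic'_nonneg (R : ℕ) : 0 ≤ harmonic' R :=
  Finset.sum_nonneg fun i _ => by positivity

lemma harmonic'_pos {R : ℕ} (hR : 0 < R) : 0 < harmonic' R := by
  apply Finset.sum_pos (fun i _ => by positivity)
  exact Finset.nonempty_range_iff.2 (Nat.pos_iff_ne_zero.1 hR)

lemma harmonic'_mono : Monotone harmonic' := fun a b hab =>
  Finset.sum_le_sum_of_subset_of_nonneg (Finset.range_subset_range.2 hab)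
    (fun i _ _ => by positivity)

/-- rank lemma -/
lemma rank_lemma {N : ℕ} {w : Fin N → ℝ} (hw : Antitone w) {t : ℝ} {k : Fin N}
    (hcard : (k : ℕ) + 1 ≤ (univ.filter (fun i => t ≤ w i)).card) : t ≤ w k := by
  by_contra h
  push_neg at h
  have hsub : (univ.filter (fun i => t ≤ w i)) ⊆ Finset.Iio k := by
    intro i hi
    simp only [mem_filter, mem_univ, true_and] at hi
    simp only [Finset.mem_Iio]
    by_contra hik
    push_neg at hik
    exact absurd hi (not_le.2 (lt_of_le_of_lt (hw hik) h))
  have := Finset.card_le_card hsub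
  rw [Fin.card_Iio] at this
  omega

/-- counting lemma -/
lemma count_ge {d R : ℕ} (c : Fin d → ℝ) (hc : ∀ j, 0 ≤ c j) (hc2 : ∑ j, (c j) ^ 2 = 1)
    (m : ℕ) (hmR : m ≤ R) :
    m - d ≤ (univ.filter fun p : Fin d × Fin R =>
      (Real.sqrt (harmonic' R))⁻¹ * (Real.sqrt (m : ℝ))⁻¹ ≤ c p.1 * muVec R p.2).card := by
  have hcle : ∀ j, c j ≤ 1 := by
    intro j
    have h1 : (c j) ^ 2 ≤ 1 := hc2 ▸ Finset.single_le_sum (f := fun j => (c j)^2)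
      (fun i _ => sq_nonneg _) (mem_univ j)
    nlinarith [hc j]
  -- the squared condition implies the condition
  have himp : ∀ p : Fin d × Fin R, ((p.2 : ℕ) + 1 : ℝ) ≤ (c p.1) ^ 2 * m →
      (Real.sqrt (harmonic' R))⁻¹ * (Real.sqrt (m : ℝ))⁻¹ ≤ c p.1 * muVec R p.2 := by
    intro p hp
    unfold muVec
    rw [show c p.1 * ((Real.sqrt (harmonic' R))⁻¹ * (Real.sqrt ((p.2 : ℝ) + 1))⁻¹)
        = (Real.sqrt (harmonic' R))⁻¹ * (c p.1 * (Real.sqrt ((p.2 : ℝ) + 1))⁻¹) by ring]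
    apply mul_le_mul_of_nonneg_left _ (inv_nonneg.2 (Real.sqrt_nonneg _))
    have hs : Real.sqrt ((p.2 : ℝ) + 1) ≤ c p.1 * Real.sqrt (m : ℝ) := by
      have : c p.1 * Real.sqrt (m : ℝ) = Real.sqrt ((c p.1)^2 * m) := by
        rw [Real.sqrt_mul (sq_nonneg _), Real.sqrt_sq (hc p.1)]
      rw [this]
      exact Real.sqrt_le_sqrt hp
    have hp2 : (0:ℝ) < (p.2 : ℝ) + 1 := by positivity
    have hsq : (0:ℝ) < Real.sqrt ((p.2 : ℝ) + 1) := Real.sqrt_pos.2 hp2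
    have hm0 : (0:ℝ) < Real.sqrt (m : ℝ) := by
      rcases Nat.eq_zero_or_pos m with h0 | h0
      · exfalso; rw [h0] at hp; push_cast at hp; nlinarith
      · have : (0:ℝ) < (m:ℝ) := by exact_mod_cast h0
        exact Real.sqrt_pos.2 this
    rw [inv_eq_one_div, inv_eq_one_div, mul_one_div, div_le_div_iff₀ hm0 hsq]
    linarith
  -- reduce to the squared condition
  have hsub := Finset.card_le_card (Finset.monotone_filter_right (univ : Finset (Fin d × Fin R))
    (fun p _ hp => himp p hp : ∀ p ∈ (univ : Finset (Fin d × Fin R)), ((p.2 : ℕ) + 1 : ℝ) ≤ (c p.1) ^ 2 * m → _))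
  refine le_trans ?_ hsub
  -- split the count over j
  have hcard : (univ.filter fun p : Fin d × Fin R => ((p.2 : ℕ) + 1 : ℝ) ≤ (c p.1) ^ 2 * m).card
      = ∑ j : Fin d, (univ.filter fun s : Fin R => ((s : ℕ) + 1 : ℝ) ≤ (c j) ^ 2 * m).card := by
    rw [Finset.card_filter, Fintype.sum_prod_type]
    refine Finset.sum_congr rfl fun j _ => ?_
    rw [Finset.card_filter]
  rw [hcard]
  set n : Fin d → ℕ := fun j => Nat.floor ((c j) ^ 2 * m) with hn
  have hnR : ∀ j, n j ≤ R := by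
    intro j
    have hc1 : (c j) ^ 2 ≤ 1 := by nlinarith [hc j, hcle j]
    have h1 : (c j) ^ 2 * m ≤ (m : ℝ) := by
      have := mul_le_mul_of_nonneg_right hc1 (Nat.cast_nonneg (α := ℝ) m)
      simpa using this
    calc n j ≤ Nat.floor (m : ℝ) := Nat.floor_le_floor h1
      _ = m := Nat.floor_natCast m
      _ ≤ R := hmR
  have hnle : ∀ j, n j ≤ (univ.filter fun s : Fin R => ((s : ℕ) + 1 : ℝ) ≤ (c j) ^ 2 * m).card := by
    intro j
    have := Finset.card_le_card_of_injOn (f := fun i : Fin (n j) => (⟨(i : ℕ), lt_of_lt_of_le i.2 (hnR j)⟩ : Fin R))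
      (s := univ) (t := univ.filter fun s : Fin R => ((s : ℕ) + 1 : ℝ) ≤ (c j) ^ 2 * m)
      (fun i _ => by
        simp only [coe_filter, mem_filter, mem_univ, true_and, Set.mem_setOf_eq]
        have h1 : (i : ℕ) + 1 ≤ n j := i.2
        have h2 : ((i : ℕ) + 1 : ℝ) ≤ (n j : ℝ) := by exact_mod_cast h1
        calc ((i : ℕ) + 1 : ℝ) ≤ (n j : ℝ) := h2
          _ ≤ (c j) ^ 2 * m := Nat.floor_le (by positivity))
      (fun a _ b _ hab => Fin.ext (by simpa using congrArg Fin.val hab))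
    simpa using this
  refine le_trans ?_ (Finset.sum_le_sum fun j (_ : j ∈ univ) => hnle j)
  -- m - d ≤ ∑ n j
  rcases le_or_gt m d with hmd | hmd
  · omega
  · have hreal : ((m : ℝ) - d) ≤ ∑ j, (n j : ℝ) := by
      have h1 : ∀ j, (c j) ^ 2 * m - 1 ≤ (n j : ℝ) := fun j =>
        le_of_lt (Nat.sub_one_lt_floor _)
      calc (m : ℝ) - d = ∑ j : Fin d, ((c j) ^ 2 * m - 1) := by
            rw [Finset.sum_sub_distrib, ← Finset.sum_mul, hc2]
            simp
        _ ≤ ∑ j, (n j : ℝ) := Finset.sum_le_sum fun j _ => h1 j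
    have : ((m - d : ℕ) : ℝ) ≤ ((∑ j, n j : ℕ) : ℝ) := by
      rw [Nat.cast_sub (le_of_lt hmd)]
      push_cast
      exact hreal
    exact_mod_cast this

lemma card_filter_equiv {α β : Type*} [Fintype α] [Fintype β] (f : α ≃ β) (P : β → Prop) :
    (univ.filter fun a => P (f a)).card = (univ.filter P).card := by
  apply Finset.card_bij (fun a _ => f a)
  · intro a ha; simp only [mem_filter, mem_univ, true_and] at ha ⊢; exact ha
  · intro a _ a' _ h; exact f.injective h
  · intro b hb
    refine ⟨f.symm b, ?_, by simp⟩
    simp only [mem_filter, mem_univ, true_and] at hb ⊢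
    simpa using hb

/-- Van Dam–Hayden embezzlement: for every `ε > 0` and `d`, for all sufficiently large `R`,
any unit vector `|φ⟩ ∈ ℂ^d` with nonnegative coordinates can be approximately embezzled:
there is a permutation `π` of `[d] × [R] ≃ [dR]` with
`⟨μ_R| P_π (|φ⟩ ⊗ |μ_R⟩) ≥ 1 - ε`, where `|μ_R⟩` is padded with zeros (occupying the
first copy of `[R]`) and `(P_π ψ)(x) = ψ(π⁻¹ x)`. -/
theorem embezzlement (ε : ℝ) (hε : 0 < ε) (d : ℕ) (hd : 0 < d) :
    ∃ R₀ : ℕ, ∀ R ≥ R₀,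
      ∀ c : Fin d → ℝ, (∀ j, 0 ≤ c j) → (∑ j, (c j) ^ 2 = 1) →
        ∃ π : Equiv.Perm (Fin d × Fin R),
          1 - ε ≤ ∑ p : Fin d × Fin R,
            (if p.1 = (⟨0, hd⟩ : Fin d) then muVec R p.2 else 0) *
              (c (π.symm p).1 * muVec R (π.symm p).2) := by
  have hdiv : Filter.Tendsto harmonic' Filter.atTop Filter.atTop := by
    have := Real.tendsto_sum_range_one_div_nat_succ_atTop
    unfold harmonic'
    convert this using 2
  obtain ⟨R₁, hR₁⟩ := Filter.eventually_atTop.1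
    (Filter.tendsto_atTop.1 hdiv (harmonic' d / ε))
  refine ⟨max R₁ (d + 1), fun R hR c hc hc2 => ?_⟩
  have hRd : d + 1 ≤ R := le_trans (le_max_right _ _) hR
  have hχ : harmonic' d / ε ≤ harmonic' R := hR₁ R (le_trans (le_max_left _ _) hR)
  have hχpos : 0 < harmonic' R := harmonic'_pos (by omega)
  set e : Fin d × Fin R ≃ Fin (d * R) := finProdFinEquiv with he
  set b : Fin (d * R) → ℝ := fun i => c (e.symm i).1 * muVec R (e.symm i).2 with hb
  set σ : Equiv.Perm (Fin (d * R)) := Tuple.sort (fun i => -(b i)) with hσ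
  set w : Fin (d * R) → ℝ := fun k => b (σ k) with hw
  have hwanti : Antitone w := by
    intro a a' haa'
    have := Tuple.monotone_sort (fun i => -(b i)) haa'
    simp only [Function.comp_apply] at this
    simp only [hw]
    linarith
  have hbnn : ∀ i, 0 ≤ b i := fun i => mul_nonneg (hc _) (muVec_nonneg _ _)
  refine ⟨(e.trans σ.symm).trans e.symm, ?_⟩
  have hπ : ∀ p, ((e.trans σ.symm).trans e.symm).symm p = e.symm (σ (e p)) := fun p => by
    simp [Equiv.symm_trans_apply]
  have hval : ∀ r : Fin R, ((e (⟨0, hd⟩, r)) : ℕ) = (r : ℕ) := fun r => by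
    simp [he, finProdFinEquiv]
  -- rewrite the sum
  have hsum : (∑ p : Fin d × Fin R,
      (if p.1 = (⟨0, hd⟩ : Fin d) then muVec R p.2 else 0) *
        (c ((((e.trans σ.symm).trans e.symm)).symm p).1 *
          muVec R ((((e.trans σ.symm).trans e.symm)).symm p).2))
      = ∑ r : Fin R, muVec R r * w (e (⟨0, hd⟩, r)) := by
    rw [Fintype.sum_prod_type]
    rw [Finset.sum_eq_single (⟨0, hd⟩ : Fin d)]
    · refine Finset.sum_congr rfl fun r _ => ?_
      rw [if_pos rfl, hπ]
    · intro j _ hj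
      apply Finset.sum_eq_zero
      intro r _
      rw [if_neg hj, zero_mul]
    · intro h; exact absurd (mem_univ _) h
  rw [hsum]
  -- the good set
  set G : Finset (Fin R) := univ.filter (fun r : Fin R => (r : ℕ) + 1 + d ≤ R) with hG
  have hstep1 : ∑ r ∈ G, muVec R r * w (e (⟨0, hd⟩, r))
      ≤ ∑ r : Fin R, muVec R r * w (e (⟨0, hd⟩, r)) := by
    apply Finset.sum_le_sum_of_subset_of_nonneg (Finset.filter_subset _ _)
    intro r _ _
    exact mul_nonneg (muVec_nonneg _ _) (hbnn _)
  -- per term bound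
  have hterm : ∀ r ∈ G, (harmonic' R)⁻¹ * (((r : ℕ) : ℝ) + 1 + d)⁻¹
      ≤ muVec R r * w (e (⟨0, hd⟩, r)) := by
    intro r hrG
    have hr : (r : ℕ) + 1 + d ≤ R := by simpa [hG] using hrG
    set m : ℕ := (r : ℕ) + 1 + d with hm
    set t : ℝ := (Real.sqrt (harmonic' R))⁻¹ * (Real.sqrt (m : ℝ))⁻¹ with ht
    have hcnt := count_ge c hc hc2 m hr
    -- transfer card to w
    have hb1 : (univ.filter fun p : Fin d × Fin R => t ≤ c p.1 * muVec R p.2).card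
        = (univ.filter fun i : Fin (d * R) => t ≤ b i).card := by
      have := card_filter_equiv e.symm (fun p : Fin d × Fin R => t ≤ c p.1 * muVec R p.2)
      rw [← this]
    have hb2 : (univ.filter fun i : Fin (d * R) => t ≤ b i).card
        = (univ.filter fun k : Fin (d * R) => t ≤ w k).card := by
      have := card_filter_equiv (σ : Fin (d * R) ≃ Fin (d * R)) (fun i : Fin (d * R) => t ≤ b i)
      rw [← this]
    have hrank : t ≤ w (e (⟨0, hd⟩, r)) := by
      apply rank_lemma hwanti
      rw [hval r]
      calc (r : ℕ) + 1 = m - d := by omega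
        _ ≤ _ := hcnt
        _ = _ := by rw [hb1, hb2]
    -- now numeric bound
    have hm1 : (1 : ℝ) ≤ (m : ℝ) := by exact_mod_cast Nat.one_le_iff_ne_zero.2 (by omega)
    have hmpos : (0 : ℝ) < (m : ℝ) := by linarith
    have hr1m : ((r : ℕ) : ℝ) + 1 ≤ (m : ℝ) := by
      have : ((r : ℕ) + 1 : ℕ) ≤ m := by omega
      exact_mod_cast this
    have hsqm : (0 : ℝ) < Real.sqrt (m : ℝ) := Real.sqrt_pos.2 hmpos
    have hsqr : (0 : ℝ) < Real.sqrt (((r : ℕ) : ℝ) + 1) := Real.sqrt_pos.2 (by positivity)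
    have hmono : (Real.sqrt (m : ℝ))⁻¹ ≤ (Real.sqrt (((r : ℕ) : ℝ) + 1))⁻¹ := by
      apply inv_anti₀ hsqr
      exact Real.sqrt_le_sqrt hr1m
    have hχsq : (Real.sqrt (harmonic' R))⁻¹ * (Real.sqrt (harmonic' R))⁻¹ = (harmonic' R)⁻¹ := by
      rw [← mul_inv, Real.mul_self_sqrt (le_of_lt hχpos)]
    have hmsq : (Real.sqrt (m : ℝ))⁻¹ * (Real.sqrt (m : ℝ))⁻¹ = ((m : ℝ))⁻¹ := by
      rw [← mul_inv, Real.mul_self_sqrt (le_of_lt hmpos)]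
    have hmcast : ((m : ℕ) : ℝ) = ((r : ℕ) : ℝ) + 1 + d := by push_cast [hm]; ring
    calc (harmonic' R)⁻¹ * (((r : ℕ) : ℝ) + 1 + d)⁻¹
        = ((Real.sqrt (harmonic' R))⁻¹ * (Real.sqrt (m : ℝ))⁻¹) *
          ((Real.sqrt (harmonic' R))⁻¹ * (Real.sqrt (m : ℝ))⁻¹) := by
          rw [show ∀ a b : ℝ, (a * b) * (a * b) = (a * a) * (b * b) from fun a b => by ring,
            hχsq, hmsq, hmcast]
      _ ≤ ((Real.sqrt (harmonic' R))⁻¹ * (Real.sqrt (((r : ℕ) : ℝ) + 1))⁻¹) * t := by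
          rw [ht]
          apply mul_le_mul_of_nonneg_right
          · exact mul_le_mul_of_nonneg_left hmono (inv_nonneg.2 (Real.sqrt_nonneg _))
          · positivity
      _ ≤ ((Real.sqrt (harmonic' R))⁻¹ * (Real.sqrt (((r : ℕ) : ℝ) + 1))⁻¹) * w (e (⟨0, hd⟩, r)) := by
          apply mul_le_mul_of_nonneg_left hrank
          positivity
      _ = muVec R r * w (e (⟨0, hd⟩, r)) := by rw [muVec]
  have hstep2 : ∑ r ∈ G, (harmonic' R)⁻¹ * (((r : ℕ) : ℝ) + 1 + d)⁻¹
      ≤ ∑ r ∈ G, muVec R r * w (e (⟨0, hd⟩, r)) :=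
    Finset.sum_le_sum hterm
  -- compute the lower sum
  have hstep3 : ∑ r ∈ G, (harmonic' R)⁻¹ * (((r : ℕ) : ℝ) + 1 + d)⁻¹
      = (harmonic' R)⁻¹ * (harmonic' R - harmonic' d) := by
    rw [← Finset.mul_sum]
    congr 1
    have h1 : ∑ r ∈ G, (((r : ℕ) : ℝ) + 1 + d)⁻¹
        = ∑ i ∈ Finset.range (R - d), (((i : ℕ) : ℝ) + 1 + d)⁻¹ := by
      rw [hG, Finset.sum_filter]
      have := Fin.sum_univ_eq_sum_range
        (fun n : ℕ => if n + 1 + d ≤ R then ((n : ℝ) + 1 + (d : ℝ))⁻¹ else 0) R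
      rw [this, ← Finset.sum_filter]
      congr 1
      ext i
      simp only [Finset.mem_filter, Finset.mem_range]
      omega
    rw [h1]
    have h2 : harmonic' R = harmonic' d + ∑ i ∈ Finset.range (R - d), 1 / (((d + i : ℕ) : ℝ) + 1) := by
      have h2' : ∀ k : ℕ, harmonic' (d + k)
          = harmonic' d + ∑ i ∈ Finset.range k, 1 / (((d + i : ℕ) : ℝ) + 1) := by
        intro k
        rw [harmonic', Finset.sum_range_add]
        rfl
      have := h2' (R - d)
      rwa [show d + (R - d) = R by omega] at this
    rw [h2, harmonic']
    push_cast
    ring_nf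
    apply Finset.sum_congr rfl
    intro i _
    congr 1
    ring
  -- conclude
  have hfinal : 1 - ε ≤ (harmonic' R)⁻¹ * (harmonic' R - harmonic' d) := by
    rw [inv_mul_eq_div, le_div_iff₀ hχpos]
    have hde : harmonic' d ≤ ε * harmonic' R := by
      rw [div_le_iff₀ hε] at hχ
      linarith
    nlinarith
  linarith [hstep1, hstep2, hstep3.symm.le]
end

section
/- (Easy direction of the edge-decomposition lemma) If an n×n Hermitian matrix M admits a decomposition M = Σ_e M_e into positive semidefinite matrices each supported on a 2×2 principal block, then the comparison matrix M̂ is positive semidefinite. -/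
/-!
For a positive semidefinite `E` supported on an edge `{a, b}`, conjugating by the diagonal
unitary with a phase `c` at `b` chosen so that `E a b * c = -‖E a b‖` turns `E` into its
comparison matrix, which is therefore positive semidefinite; hence so is the sum `S` of these
over the edges. By the triangle inequality `M̂` agrees with `S` on the diagonal and dominates
it entrywise off it. Since the off-diagonal entries of `M̂` are nonpositive, passing from `x` to
`u = (‖x i‖)ᵢ` can only decrease the quadratic form, so `x* M̂ x ≥ uᵀ M̂ u ≥ uᵀ S u ≥ 0`.
-/

open Matrix Finset
open scoped ComplexOrder

/-- The comparison matrix of `M`: same diagonal, off-diagonal entries `-|M i j|`. -/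
noncomputable def comparisonMatrix {n : ℕ} (M : Matrix (Fin n) (Fin n) ℂ) :
    Matrix (Fin n) (Fin n) ℂ :=
  Matrix.of fun i j => if i = j then M i i else -(‖M i j‖ : ℂ)

theorem Complex.exists_norm_eq_one_mul_eq_neg_norm (w : ℂ) :
    ∃ c : ℂ, ‖c‖ = 1 ∧ w * c = -‖w‖ := by
  refine ⟨-exp (-(w.arg : ℂ) * I), by simpa using norm_exp_ofReal_mul_I (-w.arg), ?_⟩
  conv_lhs => rw [← norm_mul_exp_arg_mul_I w]
  rw [mul_neg, mul_assoc, ← exp_add]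
  simp

namespace Matrix

variable {m R : Type*}

lemma PosSemidef.of_re_dotProduct_mulVec_nonneg {𝕜 : Type*} [RCLike 𝕜] [Fintype m]
    {A : Matrix m m 𝕜} (hA : A.IsHermitian) (h : ∀ x, 0 ≤ RCLike.re (star x ⬝ᵥ A *ᵥ x)) :
    A.PosSemidef :=
  .of_dotProduct_mulVec_nonneg hA fun x =>
    RCLike.nonneg_iff.mpr ⟨h x, hA.im_star_dotProduct_mulVec_self x⟩

lemma dotProduct_mulVec_le_of_apply_le [Fintype m] [Semiring R] [PartialOrder R]
    [IsOrderedRing R] [StarRing R] [StarOrderedRing R] {A B : Matrix m m R}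
    (hAB : ∀ i j, A i j ≤ B i j) {u : m → R} (hu : 0 ≤ u) :
    star u ⬝ᵥ A *ᵥ u ≤ star u ⬝ᵥ B *ᵥ u :=
  dotProduct_le_dotProduct_of_nonneg_left
    (fun i => dotProduct_le_dotProduct_of_nonneg_right (hAB i) hu)
    (fun i => star_nonneg_iff.mpr (hu i))

def IsSupportedOnEdge {α : Type*} [Zero α] (E : Matrix m m α) (a b : m) : Prop :=
  ∀ i j, E i j ≠ 0 → (i = a ∨ i = b) ∧ (j = a ∨ j = b)

end Matrix

variable {n : ℕ}

lemma comparisonMatrix_apply (M : Matrix (Fin n) (Fin n) ℂ) (i j : Fin n) :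
    comparisonMatrix M i j = if i = j then M i i else -(‖M i j‖ : ℂ) := rfl

lemma isHermitian_comparisonMatrix {M : Matrix (Fin n) (Fin n) ℂ} (hM : M.IsHermitian) :
    (comparisonMatrix M).IsHermitian := by
  ext i j
  rw [conjTranspose_apply, comparisonMatrix_apply, comparisonMatrix_apply]
  by_cases hij : i = j
  · subst hij
    simpa using hM.apply i i
  · rw [if_neg (Ne.symm hij), if_neg hij, ← hM.apply i j]
    simp

lemma comparisonMatrix_sum_apply_le {ι : Type*} (s : Finset ι)
    (Me : ι → Matrix (Fin n) (Fin n) ℂ) (i j : Fin n) :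
    (∑ t ∈ s, comparisonMatrix (Me t)) i j ≤ comparisonMatrix (∑ t ∈ s, Me t) i j := by
  by_cases hij : i = j
  · simp [Matrix.sum_apply, comparisonMatrix_apply, hij]
  · simp only [Matrix.sum_apply, comparisonMatrix_apply, if_neg hij, sum_neg_distrib,
      neg_le_neg_iff, ← Complex.ofReal_sum, Complex.real_le_real]
    exact norm_sum_le _ _

lemma re_dotProduct_abs_comparisonMatrix_mulVec_le (M : Matrix (Fin n) (Fin n) ℂ)
    (x : Fin n → ℂ) :
    (star (fun i => (‖x i‖ : ℂ)) ⬝ᵥ comparisonMatrix M *ᵥ fun i => (‖x i‖ : ℂ)).re ≤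
      (star x ⬝ᵥ comparisonMatrix M *ᵥ x).re := by
  simp only [dotProduct, mulVec, mul_sum, Complex.re_sum]
  refine sum_le_sum fun i _ => sum_le_sum fun j _ => ?_
  simp only [Pi.star_apply, Complex.star_def, Complex.conj_ofReal, comparisonMatrix_apply]
  split_ifs with hij
  · subst hij
    refine le_of_eq (congrArg Complex.re ?_)
    linear_combination -(M i i) * Complex.conj_mul' (x i)
  · have hle : ((starRingEnd ℂ) (x i) * x j).re ≤ ‖x i‖ * ‖x j‖ := by
      simpa using Complex.re_le_norm ((starRingEnd ℂ) (x i) * x j)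
    have hl : (‖x i‖ : ℂ) * (-‖M i j‖ * ‖x j‖) = ((-‖M i j‖ * (‖x i‖ * ‖x j‖) : ℝ) : ℂ) := by
      push_cast; ring
    have hr : (starRingEnd ℂ) (x i) * (-‖M i j‖ * x j)
        = ((-‖M i j‖ : ℝ) : ℂ) * ((starRingEnd ℂ) (x i) * x j) := by
      push_cast; ring
    rw [hl, hr, Complex.ofReal_re, Complex.re_ofReal_mul]
    exact mul_le_mul_of_nonpos_left hle (neg_nonpos.mpr (norm_nonneg _))

lemma exists_comparisonMatrix_eq_conjTranspose_diagonal_mul_mul_diagonal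
    {E : Matrix (Fin n) (Fin n) ℂ} (hE : E.IsHermitian) {a b : Fin n}
    (hsupp : E.IsSupportedOnEdge a b) :
    ∃ φ : Fin n → ℂ, comparisonMatrix E = (diagonal φ)ᴴ * E * diagonal φ := by
  obtain ⟨c, hc_norm, hc⟩ := Complex.exists_norm_eq_one_mul_eq_neg_norm (E a b)
  set φ : Fin n → ℂ := fun k => if k = b then c else 1 with hφ_def
  have hφ : ∀ k, star (φ k) * φ k = 1 := by
    intro k
    by_cases hk : k = b
    · simp [hφ_def, hk, Complex.conj_mul', hc_norm]
    · simp [hφ_def, hk]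
  refine ⟨φ, ?_⟩
  ext i j
  rw [diagonal_conjTranspose, mul_diagonal, diagonal_mul, comparisonMatrix_apply, Pi.star_apply]
  split_ifs with hij
  · subst hij
    linear_combination (E i i) * (hφ i).symm
  by_cases h0 : E i j = 0
  · simp [h0]
  obtain ⟨hi | hi, hj | hj⟩ := hsupp i j h0 <;> subst i j
  · exact absurd rfl hij
  · simp [hφ_def, hij, hc]
  · rw [← hE.apply b a]
    simp only [hφ_def, if_pos rfl, if_neg (Ne.symm hij), mul_one, norm_star, ← star_mul, hc]
    simp
  · exact absurd rfl hij

lemma Matrix.PosSemidef.comparisonMatrix_of_isSupportedOnEdge {E : Matrix (Fin n) (Fin n) ℂ}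
    (hE : E.PosSemidef) {a b : Fin n} (hsupp : E.IsSupportedOnEdge a b) :
    (comparisonMatrix E).PosSemidef := by
  obtain ⟨φ, hφ⟩ :=
    exists_comparisonMatrix_eq_conjTranspose_diagonal_mul_mul_diagonal hE.1 hsupp
  exact hφ ▸ hE.conjTranspose_mul_mul_same _

/-- If a Hermitian matrix `M` is a sum of PSD matrices each supported on a `2 × 2`
principal block, then its comparison matrix is positive semidefinite. -/
theorem comparison_posSemidef_of_edge_decomposition {n : ℕ} {ι : Type*} [Fintype ι]
    (M : Matrix (Fin n) (Fin n) ℂ) (hM : M.IsHermitian)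
    (Me : ι → Matrix (Fin n) (Fin n) ℂ)
    (hpsd : ∀ t, (Me t).PosSemidef)
    (hsupp : ∀ t, ∃ a b : Fin n, ∀ i j, Me t i j ≠ 0 → (i = a ∨ i = b) ∧ (j = a ∨ j = b))
    (hsum : M = ∑ t, Me t) :
    (comparisonMatrix M).PosSemidef := by
  refine .of_re_dotProduct_mulVec_nonneg (isHermitian_comparisonMatrix hM) fun x => ?_
  set u : Fin n → ℂ := fun i => (‖x i‖ : ℂ)
  have hu : 0 ≤ u := fun i => Complex.zero_le_real.mpr (norm_nonneg _)
  have hedges : (∑ t, comparisonMatrix (Me t)).PosSemidef :=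
    posSemidef_sum _ fun t _ =>
      let ⟨_, _, hab⟩ := hsupp t
      (hpsd t).comparisonMatrix_of_isSupportedOnEdge hab
  have hu_nonneg : 0 ≤ star u ⬝ᵥ comparisonMatrix M *ᵥ u := by
    rw [hsum]
    exact (hedges.dotProduct_mulVec_nonneg u).trans
      (dotProduct_mulVec_le_of_apply_le (comparisonMatrix_sum_apply_le _ Me) hu)
  exact (Complex.nonneg_iff.mp hu_nonneg).1.trans
    (re_dotProduct_abs_comparisonMatrix_mulVec_le M x)
end

section
/- Let M be an n×n Hermitian matrix with PSD comparison matrix M̂, and let X be an n×n Hermitian matrix all of whose 2×2 principal submatrices are positive semidefinite (equivalently, X_{ii} ≥ 0 and |X_{ij}|² ≤ X_{ii}X_{jj} for all i,j). Then tr(X†M) ≥ 0. -/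
open Matrix
open scoped ComplexOrder

/-- If `M` is Hermitian with PSD comparison matrix, and `X` is Hermitian with all `2 × 2`
principal submatrices PSD (i.e. `X i i ≥ 0` and `|X i j| ≤ √(X i i · X j j)`), then
`tr (Xᴴ M) ≥ 0`. -/
theorem trace_nonneg_of_comparison_posSemidef {n : ℕ} (M X : Matrix (Fin n) (Fin n) ℂ)
    (hM : M.IsHermitian) (hMhat : (comparisonMatrix M).PosSemidef)
    (hX : X.IsHermitian)
    (hXdiag : ∀ i, 0 ≤ (X i i).re)
    (hXoff : ∀ i j, ‖X i j‖ ≤ Real.sqrt ((X i i).re * (X j j).re)) :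
    0 ≤ (Xᴴ * M).trace := by
  rw [hX.eq]
  rw [Complex.le_def]
  constructor
  · -- real part
    set v : Fin n → ℝ := fun i => Real.sqrt (X i i).re with hv
    set w : Fin n → ℂ := fun i => (v i : ℂ) with hw
    have hquad := hMhat.dotProduct_mulVec_nonneg w
    have hquadre : 0 ≤ (star w ⬝ᵥ (comparisonMatrix M *ᵥ w)).re :=
      (Complex.le_def.mp hquad).1
    have hform : (star w ⬝ᵥ (comparisonMatrix M *ᵥ w)).re
        = ∑ i, ∑ j, v i * v j * (comparisonMatrix M i j).re := by
      simp only [dotProduct, Matrix.mulVec, dotProduct, Finset.mul_sum, hw,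
        Pi.star_apply, Complex.star_def, Complex.conj_ofReal]
      rw [Complex.re_sum]
      refine Finset.sum_congr rfl fun i _ => ?_
      rw [Complex.re_sum]
      refine Finset.sum_congr rfl fun j _ => ?_
      simp [Complex.mul_re, Complex.ofReal_re, Complex.ofReal_im]
      ring
    have htr : ((X * M).trace).re = ∑ i, ∑ j, (X i j * M j i).re := by
      simp only [Matrix.trace, Matrix.diag, Matrix.mul_apply]
      rw [Complex.re_sum]
      exact Finset.sum_congr rfl fun i _ => Complex.re_sum _ _
    rw [htr, Complex.zero_re]
    calc (0:ℝ) ≤ ∑ i, ∑ j, v i * v j * (comparisonMatrix M i j).re := by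
          rw [← hform]; exact hquadre
      _ ≤ ∑ i, ∑ j, (X i j * M j i).re := by
          refine Finset.sum_le_sum fun i _ => Finset.sum_le_sum fun j _ => ?_
          rcases eq_or_ne i j with rfl | hij
          · -- diagonal
            have hXim : (X i i).im = 0 := by
              have := congrFun (congrFun hX.eq i) i
              simp only [Matrix.conjTranspose_apply] at this
              have := congrArg Complex.im this
              simpa using by
                have h2 := congrArg Complex.im (congrFun (congrFun hX.eq i) i)
                simp [Matrix.conjTranspose_apply] at h2
                linarith
            have hvi : v i * v i = (X i i).re := Real.mul_self_sqrt (hXdiag i)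
            simp [comparisonMatrix, Complex.mul_re, hXim, hvi]
          · -- off-diagonal
            have hMji : ‖M j i‖ = ‖M i j‖ := by
              have h := congrFun (congrFun hM.eq j) i
              simp only [Matrix.conjTranspose_apply] at h
              rw [← h]
              simp
            have habs : |(X i j * M j i).re| ≤ ‖X i j‖ * ‖M j i‖ := by
              rw [← norm_mul]
              exact Complex.abs_re_le_norm _
            have h1 : -(‖X i j‖ * ‖M j i‖) ≤ (X i j * M j i).re :=
              (abs_le.mp habs).1
            have hvv : ‖X i j‖ ≤ v i * v j := by
              simpa [hv, Real.sqrt_mul (hXdiag i)] using hXoff i j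
            have h2 : ‖X i j‖ * ‖M j i‖
                ≤ v i * v j * ‖M i j‖ := by
              rw [hMji]
              exact mul_le_mul_of_nonneg_right hvv (norm_nonneg _)
            have hcmp : v i * v j * (comparisonMatrix M i j).re
                = -(v i * v j * ‖M i j‖) := by
              simp [comparisonMatrix, hij]
            rw [hcmp]
            linarith
  · -- imaginary part
    have hc : star ((X * M).trace) = (X * M).trace := by
      rw [← Matrix.trace_conjTranspose, Matrix.conjTranspose_mul, hM.eq, hX.eq,
        Matrix.trace_mul_comm]
    have := Complex.conj_eq_iff_im.mp hc
    simp [this]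
end

section
/- Let C be an n×n Hermitian matrix and suppose that for matrices T_{+1} = I₂ and T_{−1} = the swap matrix, and a symmetric sign assignment ε: {(i,j): i≠j} → {±1}, the 2n×2n matrix C̃ = Σ_{i,j} C_{ij} |i⟩⟨j| ⊗ T_{ε(i,j)} (with T on the diagonal being I₂) is positive semidefinite. Then the Hadamard product C ∘ Γ_ε, where (Γ_ε)_{ii}=1 and (Γ_ε)_{ij} = ε(i,j), is positive semidefinite. -/
open Matrix
open scoped ComplexOrder

/-- `T_{+1} = I₂` and `T_{-1}` = the swap matrix, encoded as a function of a sign. -/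
noncomputable def Tsign (s : ℝ) : Matrix (Fin 2) (Fin 2) ℂ :=
  Matrix.of fun k l => if s = 1 then (if k = l then 1 else 0) else (if k = l then 0 else 1)

/-- If the `2n × 2n` inflation matrix `C̃ = ∑_{i,j} C_{ij} |i⟩⟨j| ⊗ T_{ε(i,j)}`
(with `T = I₂` on the diagonal blocks) is positive semidefinite, then the Hadamard
product `C ∘ Γ_ε` (unit diagonal, off-diagonal entries `C_{ij} ε(i,j)`) is positive
semidefinite. -/
theorem hadamard_sign_posSemidef_of_inflation {n : ℕ} (C : Matrix (Fin n) (Fin n) ℂ)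
    (hC : C.IsHermitian) (ε : Fin n → Fin n → ℝ)
    (hsymm : ∀ i j, ε i j = ε j i)
    (hsign : ∀ i j, i ≠ j → ε i j = 1 ∨ ε i j = -1)
    (hinfl : (Matrix.of fun p q : Fin n × Fin 2 =>
        C p.1 q.1 * (if p.1 = q.1 then (if p.2 = q.2 then (1 : ℂ) else 0)
          else Tsign (ε p.1 q.1) p.2 q.2)).PosSemidef) :
    (Matrix.of fun i j : Fin n =>
      if i = j then C i i else C i j * (ε i j : ℂ)).PosSemidef := by
  classical
  set A : Matrix (Fin n × Fin 2) (Fin n × Fin 2) ℂ := Matrix.of fun p q : Fin n × Fin 2 =>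
        C p.1 q.1 * (if p.1 = q.1 then (if p.2 = q.2 then (1 : ℂ) else 0)
          else Tsign (ε p.1 q.1) p.2 q.2) with hA
  set M : Matrix (Fin n) (Fin n) ℂ := Matrix.of fun i j : Fin n =>
      if i = j then C i i else C i j * (ε i j : ℂ) with hM
  rw [posSemidef_iff_dotProduct_mulVec]
  constructor
  · -- Hermitian
    ext i j
    simp only [hM, conjTranspose_apply, of_apply]
    by_cases h : i = j
    · subst h
      simp [hC.apply i i]
    · rw [if_neg (Ne.symm h), if_neg h]
      have : (starRingEnd ℂ) ((ε j i : ℝ) : ℂ) = ((ε j i : ℝ) : ℂ) := by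
        simp
      rw [star_mul', hC.apply i j]
      simp [hsymm i j, Complex.conj_ofReal]
  · intro x
    set y : Fin n × Fin 2 → ℂ := fun p => x p.1 * (if p.2 = 0 then 1 else -1) with hy
    have h0 := hinfl.dotProduct_mulVec_nonneg y
    have hkey : star y ⬝ᵥ A *ᵥ y = 2 * (star x ⬝ᵥ M *ᵥ x) := by
      have lhs : star y ⬝ᵥ A *ᵥ y
          = ∑ i, ∑ j, ∑ k : Fin 2, ∑ l : Fin 2,
              star (y (i, k)) * (A (i, k) (j, l) * y (j, l)) := by
        simp only [dotProduct, mulVec, Finset.mul_sum, Fintype.sum_prod_type,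
          Pi.star_apply]
        refine Finset.sum_congr rfl fun i _ => ?_
        rw [Finset.sum_comm]
      have rhs : 2 * (star x ⬝ᵥ M *ᵥ x)
          = ∑ i, ∑ j, 2 * (star (x i) * (M i j * x j)) := by
        simp only [dotProduct, mulVec, Finset.mul_sum, Pi.star_apply]
      rw [lhs, rhs]
      refine Finset.sum_congr rfl fun i _ => Finset.sum_congr rfl fun j _ => ?_
      by_cases hij : i = j
      · subst hij
        simp only [hy, hA, hM, of_apply, if_pos rfl, Fin.sum_univ_two]
        norm_num
        ring
      · rcases hsign i j hij with hs | hs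
        · simp only [hy, hA, hM, of_apply, if_neg hij, hs, Tsign, Fin.sum_univ_two]
          norm_num
          ring
        · simp only [hy, hA, hM, of_apply, if_neg hij, hs, Tsign, Fin.sum_univ_two]
          norm_num
          ring
    rw [hkey] at h0
    rw [Complex.le_def] at h0 ⊢
    constructor
    · have := h0.1
      simp only [Complex.mul_re, Complex.zero_re] at this ⊢
      simp only [Complex.re_ofNat, Complex.im_ofNat] at this
      norm_num at this
      linarith
    · have := h0.2
      simp only [Complex.mul_im, Complex.zero_im] at this ⊢
      simp only [Complex.re_ofNat, Complex.im_ofNat] at this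
      norm_num at this
      linarith
end

section
/- Let L_α, α = 1,…,m, be the closed convex cones of n×n PSD Hermitian matrices supported on fixed index subsets S_α ⊆ [n]. Then the Minkowski sum L = Σ_α L_α is a closed convex cone. -/
open Matrix Finset
open scoped ComplexOrder

/-- The cone of PSD matrices supported on an index subset `S` (entries vanish outside
rows and columns in `S`). -/
def suppCone {n : ℕ} (S : Finset (Fin n)) : Set (Matrix (Fin n) (Fin n) ℂ) :=
  {M | M.PosSemidef ∧ ∀ i j, (i ∉ S ∨ j ∉ S) → M i j = 0}

namespace SuppConeAux

variable {n : ℕ}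

instance matFC : FirstCountableTopology (Matrix (Fin n) (Fin n) ℂ) :=
  inferInstanceAs (FirstCountableTopology (Fin n → Fin n → ℂ))

lemma diag_nonneg {A : Matrix (Fin n) (Fin n) ℂ} (hA : A.PosSemidef) (i : Fin n) :
    0 ≤ A i i := by
  have h := (posSemidef_iff_dotProduct_mulVec.mp hA).2 ((Pi.single i 1 : Fin n → ℂ))
  have hs : star ((Pi.single i 1 : Fin n → ℂ)) = (Pi.single i 1 : Fin n → ℂ) := by
    ext k; simp [Pi.single_apply, apply_ite]
  rw [hs, single_dotProduct, one_mul, mulVec_single] at h; simpa using h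

lemma entry_bound {A : Matrix (Fin n) (Fin n) ℂ} (hA : A.PosSemidef) (i j : Fin n) :
    ‖A i j‖ ≤ (A i i).re + (A j j).re := by
  obtain ⟨B, rfl⟩ : ∃ B : Matrix (Fin n) (Fin n) ℂ, A = Bᴴ * B := by
    open scoped MatrixOrder in
    obtain ⟨B, hB⟩ := CStarAlgebra.nonneg_iff_eq_star_mul_self.mp hA.nonneg
    exact ⟨B, hB⟩
  set c : Fin n → EuclideanSpace ℂ (Fin n) := fun k => WithLp.toLp 2 (fun l => B l k) with hc
  have key : ∀ a b : Fin n, (Bᴴ * B) a b = inner ℂ (c a) (c b) := by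
    intro a b
    simp [Matrix.mul_apply, PiLp.inner_apply, RCLike.inner_apply, hc, conjTranspose_apply, mul_comm]
  have h1 : ‖(Bᴴ * B) i j‖ ≤ ‖c i‖ * ‖c j‖ := by
    rw [key]; exact norm_inner_le_norm _ _
  have h2 : ((Bᴴ * B) i i).re = ‖c i‖ ^ 2 := by
    rw [key]
    exact_mod_cast @inner_self_eq_norm_sq ℂ _ _ _ _ (c i)
  have h3 : ((Bᴴ * B) j j).re = ‖c j‖ ^ 2 := by
    rw [key]
    exact_mod_cast @inner_self_eq_norm_sq ℂ _ _ _ _ (c j)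
  rw [h2, h3]
  nlinarith [norm_nonneg (c i), norm_nonneg (c j), sq_nonneg (‖c i‖ - ‖c j‖), h1]

lemma isClosed_nonneg : IsClosed {z : ℂ | 0 ≤ z} := by
  have : {z : ℂ | 0 ≤ z} = {z : ℂ | 0 ≤ z.re} ∩ {z : ℂ | z.im = 0} := by
    ext z
    simp only [Set.mem_setOf_eq, Set.mem_inter_iff, Complex.le_def]
    constructor
    · rintro ⟨h1, h2⟩; exact ⟨by simpa using h1, by simpa using h2.symm⟩
    · rintro ⟨h1, h2⟩; exact ⟨by simpa using h1, by simp [h2]⟩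
  rw [this]
  exact (isClosed_le continuous_const Complex.continuous_re).inter
    (isClosed_eq Complex.continuous_im continuous_const)

lemma isClosed_posSemidef : IsClosed {M : Matrix (Fin n) (Fin n) ℂ | M.PosSemidef} := by
  have : {M : Matrix (Fin n) (Fin n) ℂ | M.PosSemidef} =
      {M : Matrix (Fin n) (Fin n) ℂ | M.IsHermitian} ∩
        ⋂ x : Fin n → ℂ, {M : Matrix (Fin n) (Fin n) ℂ | 0 ≤ star x ⬝ᵥ M *ᵥ x} := by
    ext M
    simp only [Set.mem_setOf_eq, Set.mem_inter_iff, Set.mem_iInter]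
    exact ⟨fun h => ⟨h.1, fun x => (posSemidef_iff_dotProduct_mulVec.mp h).2 x⟩,
      fun h => posSemidef_iff_dotProduct_mulVec.mpr ⟨h.1, fun x => h.2 x⟩⟩
  rw [this]
  refine (isClosed_eq (continuous_id.matrix_conjTranspose) continuous_id).inter
    (isClosed_iInter fun x => ?_)
  exact isClosed_nonneg.preimage
    (continuous_const.dotProduct (continuous_id.matrix_mulVec continuous_const))

lemma isClosed_suppCone (S : Finset (Fin n)) : IsClosed (suppCone S) := by
  have : suppCone S = {M : Matrix (Fin n) (Fin n) ℂ | M.PosSemidef} ∩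
      ⋂ (p : Fin n × Fin n) (_ : p.1 ∉ S ∨ p.2 ∉ S),
        {M : Matrix (Fin n) (Fin n) ℂ | M p.1 p.2 = 0} := by
    ext M
    simp only [suppCone, Set.mem_setOf_eq, Set.mem_inter_iff, Set.mem_iInter, Prod.forall]
    try tauto
  rw [this]
  exact isClosed_posSemidef.inter <| isClosed_iInter fun p => isClosed_iInter fun _ =>
    isClosed_eq (continuous_id.matrix_elem _ _) continuous_const

lemma smul_mem_suppCone {S : Finset (Fin n)} {A : Matrix (Fin n) (Fin n) ℂ}
    (hA : A ∈ suppCone S) {r : ℝ} (hr : 0 ≤ r) : r • A ∈ suppCone S := by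
  obtain ⟨hPSD, hsupp⟩ := hA
  obtain ⟨hH, hQ⟩ := posSemidef_iff_dotProduct_mulVec.mp hPSD
  refine ⟨posSemidef_iff_dotProduct_mulVec.mpr ⟨?_, fun x => ?_⟩, fun i j h => by simp [hsupp i j h]⟩
  · unfold Matrix.IsHermitian
    ext i j
    simp only [conjTranspose_apply, Matrix.smul_apply, star_smul, star_trivial]
    rw [← conjTranspose_apply, hH]
  · have : star x ⬝ᵥ (r • A) *ᵥ x = (r : ℂ) * (star x ⬝ᵥ A *ᵥ x) := by
      have : (r • A) = (r : ℂ) • A := by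
        ext i j; simp [Complex.real_smul]
      rw [this, smul_mulVec, dotProduct_smul, smul_eq_mul]
    rw [this]
    exact mul_nonneg (by exact_mod_cast Complex.zero_le_real.mpr hr) (hQ x)

lemma sum_posSemidef {m : ℕ} {f : Fin m → Matrix (Fin n) (Fin n) ℂ}
    (hf : ∀ α, (f α).PosSemidef) : (∑ α, f α).PosSemidef :=
  Finset.sum_induction f Matrix.PosSemidef (fun _ _ ha hb => ha.add hb)
    Matrix.PosSemidef.zero (fun α _ => hf α)

end SuppConeAux

open SuppConeAux

/-- The Minkowski sum `L = ∑_α L_α` of the cones of PSD matrices supported on subsets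
`S α ⊆ [n]` is a closed convex cone. -/
theorem sum_suppCones_closed_convex_cone {n m : ℕ} (S : Fin m → Finset (Fin n)) :
    IsClosed {M : Matrix (Fin n) (Fin n) ℂ |
        ∃ f : Fin m → Matrix (Fin n) (Fin n) ℂ,
          (∀ α, f α ∈ suppCone (S α)) ∧ M = ∑ α, f α} ∧
    Convex ℝ {M : Matrix (Fin n) (Fin n) ℂ |
        ∃ f : Fin m → Matrix (Fin n) (Fin n) ℂ,
          (∀ α, f α ∈ suppCone (S α)) ∧ M = ∑ α, f α} ∧
    (∀ M ∈ {M : Matrix (Fin n) (Fin n) ℂ |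
        ∃ f : Fin m → Matrix (Fin n) (Fin n) ℂ,
          (∀ α, f α ∈ suppCone (S α)) ∧ M = ∑ α, f α},
      ∀ r : ℝ, 0 ≤ r → r • M ∈ {M : Matrix (Fin n) (Fin n) ℂ |
        ∃ f : Fin m → Matrix (Fin n) (Fin n) ℂ,
          (∀ α, f α ∈ suppCone (S α)) ∧ M = ∑ α, f α}) := by
  refine ⟨?_, ?_, ?_⟩
  · -- closedness
    apply IsSeqClosed.isClosed
    intro u M hu hlim
    choose f hf hsum using hu
    -- each u k is PSD
    have huPSD : ∀ k, (u k).PosSemidef := fun k =>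
      (hsum k) ▸ sum_posSemidef (fun α => (hf k α).1)
    -- the trace-like quantity converges, hence bounded above
    have htr : Filter.Tendsto (fun k => ∑ i, (u k i i).re) Filter.atTop
        (nhds (∑ i, (M i i).re)) := by
      have hcont : Continuous fun A : Matrix (Fin n) (Fin n) ℂ => ∑ i, (A i i).re :=
        continuous_finset_sum _ fun i _ =>
          Complex.continuous_re.comp (continuous_id.matrix_elem i i)
      exact (hcont.tendsto M).comp hlim
    obtain ⟨B, hB⟩ := htr.bddAbove_range
    have hBb : ∀ k, ∑ i, (u k i i).re ≤ B := fun k => hB (Set.mem_range_self k)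
    -- entry bound for the summands
    have hbound : ∀ k α i j, ‖f k α i j‖ ≤ 2 * B := by
      intro k α i j
      have hdiag : ∀ a, (f k α a a).re ≤ ∑ i, (u k i i).re := by
        intro a
        have h1 : (f k α a a).re ≤ (u k a a).re := by
          have : u k a a = ∑ β, f k β a a := by rw [hsum k]; simp [Matrix.sum_apply]
          rw [this, Complex.re_sum]
          exact Finset.single_le_sum
            (fun β _ => (Complex.le_def.mp (diag_nonneg (hf k β).1 a)).1)
            (Finset.mem_univ α)
        have h2 : (u k a a).re ≤ ∑ i, (u k i i).re :=
          Finset.single_le_sum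
            (fun i _ => (Complex.le_def.mp (diag_nonneg (huPSD k) i)).1)
            (Finset.mem_univ a)
        linarith
      have := entry_bound (hf k α).1 i j
      have := hdiag i
      have := hdiag j
      have := hBb k
      linarith
    -- a compact box containing all the f k
    set C : ℝ := |2 * B| + 1 with hC
    have hbound' : ∀ k α i j, f k α i j ∈ Metric.closedBall (0 : ℂ) C := by
      intro k α i j
      rw [Metric.mem_closedBall, dist_zero_right]
      have := hbound k α i j
      have : ‖f k α i j‖ ≤ 2 * B := this
      have h2 : (2*B) ≤ |2*B| := le_abs_self _
      rw [hC]; linarith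
    set T : Set (Fin m → Matrix (Fin n) (Fin n) ℂ) :=
      Set.pi Set.univ (fun _ : Fin m => (Set.pi Set.univ (fun _ : Fin n =>
        Set.pi Set.univ (fun _ : Fin n => Metric.closedBall (0 : ℂ) C)) :
          Set (Matrix (Fin n) (Fin n) ℂ))) with hT
    have hTcompact : IsCompact T := by
      refine isCompact_univ_pi fun _ => ?_
      exact isCompact_univ_pi fun _ => isCompact_univ_pi fun _ =>
        ProperSpace.isCompact_closedBall 0 C
    set K : Set (Fin m → Matrix (Fin n) (Fin n) ℂ) :=
      T ∩ ⋂ α, (fun g => g α) ⁻¹' suppCone (S α) with hK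
    have hKcompact : IsCompact K :=
      hTcompact.inter_right (isClosed_iInter fun α =>
        (isClosed_suppCone (S α)).preimage (continuous_apply α))
    have hmemK : ∀ k, f k ∈ K := by
      intro k
      refine ⟨fun α _ => fun i _ => fun j _ => hbound' k α i j, ?_⟩
      simp only [Set.mem_iInter, Set.mem_preimage]
      exact fun α => hf k α
    obtain ⟨g, hgK, φ, hφ, hconv⟩ := hKcompact.tendsto_subseq hmemK
    have hgcone : ∀ α, g α ∈ suppCone (S α) := by
      have := hgK.2
      simp only [Set.mem_iInter, Set.mem_preimage] at this
      exact this
    refine ⟨g, hgcone, ?_⟩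
    have hcomp : ∀ α, Filter.Tendsto (fun k => f (φ k) α) Filter.atTop (nhds (g α)) :=
      fun α => tendsto_pi_nhds.mp hconv α
    have hsum1 : Filter.Tendsto (fun k => ∑ α, f (φ k) α) Filter.atTop
        (nhds (∑ α, g α)) := tendsto_finset_sum _ fun α _ => hcomp α
    have hsum2 : Filter.Tendsto (fun k => ∑ α, f (φ k) α) Filter.atTop (nhds M) := by
      have : (fun k => ∑ α, f (φ k) α) = fun k => u (φ k) := by
        funext k; exact (hsum (φ k)).symm
      rw [this]
      exact hlim.comp hφ.tendsto_atTop
    exact tendsto_nhds_unique hsum2 hsum1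
  · -- convexity
    rintro x ⟨fx, hfx, rfl⟩ y ⟨fy, hfy, rfl⟩ a b ha hb hab
    refine ⟨fun α => a • fx α + b • fy α, fun α => ?_, ?_⟩
    · obtain ⟨h1, h2⟩ := smul_mem_suppCone (hfx α) ha
      obtain ⟨h3, h4⟩ := smul_mem_suppCone (hfy α) hb
      exact ⟨h1.add h3, fun i j h => by simp [h2 i j h, h4 i j h]⟩
    · rw [Finset.sum_add_distrib, ← Finset.smul_sum, ← Finset.smul_sum]
  · -- cone
    rintro M ⟨f, hf, rfl⟩ r hr
    exact ⟨fun α => r • f α, fun α => smul_mem_suppCone (hf α) hr,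
      by rw [← Finset.smul_sum]⟩
end
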